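/- arXiv:1602.06236 — 2 statements merged into one kernel-verified Lean document; each statement's English description precedes it below -/
import Mathlib

section
/- The fractional vertex covering number of the 'star of paths' query SP_k, whose hypergraph has a center vertex z, vertices x_1,...,x_k, y_1,...,y_k, and edges {z,x_i} and {x_i,y_i} for i ∈ [k], equals k. -/
/-- The vertex set of the star-of-paths query `SP_k`: the center `z`,
the middle vertices `x_1, …, x_k`, and the leaves `y_1, …, y_k`. -/
abbrev SPVertex (k : ℕ) := Unit ⊕ (Fin k ⊕ Fin k)

/-- The fractional vertex covering number of the query `SP_k`, whose hypergraph has a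
center vertex `z`, vertices `x_1, …, x_k, y_1, …, y_k`, and edges `{z, x_i}` and
`{x_i, y_i}` for `i ∈ [k]`, equals `k`. -/
theorem fractional_cover_SP (k : ℕ) (hk : 1 ≤ k) :
    sInf {s : ℝ | ∃ w : SPVertex k → ℝ,
        (∀ v, 0 ≤ w v) ∧
        (∀ i : Fin k, 1 ≤ w (Sum.inl ()) + w (Sum.inr (Sum.inl i))) ∧
        (∀ i : Fin k, 1 ≤ w (Sum.inr (Sum.inl i)) + w (Sum.inr (Sum.inr i))) ∧
        s = ∑ v, w v}
      = (k : ℝ) := by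
  have hlb : ∀ s ∈ {s : ℝ | ∃ w : SPVertex k → ℝ,
        (∀ v, 0 ≤ w v) ∧
        (∀ i : Fin k, 1 ≤ w (Sum.inl ()) + w (Sum.inr (Sum.inl i))) ∧
        (∀ i : Fin k, 1 ≤ w (Sum.inr (Sum.inl i)) + w (Sum.inr (Sum.inr i))) ∧
        s = ∑ v, w v}, (k : ℝ) ≤ s := by
    rintro s ⟨w, h0, h1, h2, rfl⟩
    have key : (k : ℝ) ≤ ∑ i : Fin k,
        (w (Sum.inr (Sum.inl i)) + w (Sum.inr (Sum.inr i))) := by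
      calc (k : ℝ) = ∑ _i : Fin k, (1 : ℝ) := by simp
        _ ≤ _ := Finset.sum_le_sum fun i _ => h2 i
    rw [Fintype.sum_sum_type, Fintype.sum_sum_type, Finset.univ_unique,
      Finset.sum_singleton]
    have hz := h0 (Sum.inl default)
    rw [Finset.sum_add_distrib] at key
    linarith
  have hmem : (k : ℝ) ∈ {s : ℝ | ∃ w : SPVertex k → ℝ,
        (∀ v, 0 ≤ w v) ∧
        (∀ i : Fin k, 1 ≤ w (Sum.inl ()) + w (Sum.inr (Sum.inl i))) ∧
        (∀ i : Fin k, 1 ≤ w (Sum.inr (Sum.inl i)) + w (Sum.inr (Sum.inr i))) ∧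
        s = ∑ v, w v} := by
    refine ⟨fun v => match v with
      | Sum.inl _ => 0
      | Sum.inr (Sum.inl _) => 1
      | Sum.inr (Sum.inr _) => 0, ?_, ?_, ?_, ?_⟩
    · rintro (_ | _ | _) <;> norm_num
    · intro i; norm_num
    · intro i; norm_num
    · simp [Fintype.sum_sum_type]
  exact le_antisymm (csInf_le ⟨(k : ℝ), hlb⟩ hmem) (le_csInf ⟨_, hmem⟩ hlb)
end

section
/- Let ε ∈ [0,1), k_ε = 2⌊1/(1−ε)⌋, and suppose k ≥ 2. The path query L_k can be evaluated by a query plan of depth ⌈log_{k_ε}(k)⌉ in which every operator is a path join of length at most k_ε: formally, define T(k) = 1 if k ≤ k_ε and T(k) = 1 + T(⌈k/k_ε⌉) otherwise; then T(k) ≤ ⌈log_{k_ε}(k)⌉ for all k ≥ 2 (with T(k)=1 when k ≤ k_ε). -/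
/-- Let `ε ∈ [0,1)` and `k_ε = 2⌊1/(1-ε)⌋`. The path query `L_k` is evaluated by a
query plan whose depth `T k` satisfies `T k = 1` for `k ≤ k_ε` and
`T k = 1 + T ⌈k/k_ε⌉` otherwise; then `T k ≤ ⌈log_{k_ε} k⌉` for all `k ≥ 2`. -/
theorem query_plan_depth_le_ceil_logb (ε : ℝ) (hε0 : 0 ≤ ε) (hε1 : ε < 1) :
    let kε : ℕ := 2 * ⌊1 / (1 - ε)⌋₊
    ∀ T : ℕ → ℕ,
      (∀ k, k ≤ kε → T k = 1) →
      (∀ k, kε < k → T k = 1 + T ((k + kε - 1) / kε)) →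
      ∀ k : ℕ, 2 ≤ k → (T k : ℤ) ≤ ⌈Real.logb kε (k : ℝ)⌉ := by
  intro kε T hbase hrec k hk
  have h1 : (1 : ℝ) ≤ 1 / (1 - ε) := by
    rw [le_div_iff₀ (by linarith)]; linarith
  have hfloor : 1 ≤ ⌊1 / (1 - ε)⌋₊ := Nat.le_floor (by exact_mod_cast h1)
  have hkε : 2 ≤ kε := by
    show 2 ≤ 2 * ⌊1 / (1 - ε)⌋₊
    omega
  have hkε1 : 1 < kε := hkε
  -- reduce to Nat.clog
  have key : ∀ k, 2 ≤ k → T k ≤ Nat.clog kε k := by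
    intro k
    induction k using Nat.strong_induction_on with
    | _ k ih =>
      intro hk2
      by_cases hle : k ≤ kε
      · rw [hbase k hle]
        exact Nat.clog_pos hkε1 hk2
      · push_neg at hle
        have hrecT := hrec k hle
        have hrecC := Nat.clog_of_two_le hkε1 hk2
        set m := (k + kε - 1) / kε with hm
        have hm2 : 2 ≤ m := by
          have : kε * 2 ≤ k + kε - 1 := by omega
          exact (Nat.le_div_iff_mul_le (by omega)).mpr (by omega)
        have hmlt : m < k := by
          have h3 : k * 2 ≤ k * kε := Nat.mul_le_mul_left k hkε
          have h2 : k + kε - 1 < k * kε := by omega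
          exact (Nat.div_lt_iff_lt_mul (by omega)).mpr h2
        have := ih m hmlt hm2
        omega
  have hclog := key k hk
  have heq : ⌈Real.logb kε (k : ℝ)⌉ = (Nat.clog kε k : ℤ) := by
    rw [Real.ceil_logb_natCast (by positivity), Int.clog_natCast]
  rw [heq]
  exact_mod_cast hclog
end
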